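/- For any TIOTS P₀ with triple-trace structure (I₀, O₀, TT₀, TR₀, TE₀), the triple-trace structure of the mirror P₀¬ is (O₀, I₀, TT₀, TT₀ ∖ TE₀, TT₀ ∖ TR₀); that is, mirroring keeps the set of all traces, the realisable traces of P₀¬ are TT₀ ∖ TE₀, and the error traces of P₀¬ are TT₀ ∖ TR₀. -/

import Mathlib

open Classical

namespace TSpec

/-- Positive real time delays. -/
abbrev Delay : Type := {d : ℝ // 0 < d}

/-- Sum of two positive delays. -/
def dsum (d e : Delay) : Delay := ⟨d.1 + e.1, add_pos d.2 e.2⟩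

/-- Timed actions over an action alphabet `Act`: visible actions or positive delays. -/
inductive TAct (Act : Type) : Type where
  | act : Act → TAct Act
  | delay : Delay → TAct Act

/-- A timed action is a delay. -/
def TAct.isDelay {Act : Type} : TAct Act → Prop
  | .act _ => False
  | .delay _ => True

/-- A timed action is valid for a set `A` of visible actions:
visible actions must belong to `A`, delays are always valid.
(For `A = O` this expresses membership in the timed outputs `tO = O ⊎ ℝ>0`,
for `A = I ∪ O` membership in the timed alphabet `tA`.) -/
def TAct.valid {Act : Type} (A : Set Act) : TAct Act → Prop
  | .act a => a ∈ A
  | .delay _ => True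

/-- Timed words: finite sequences of timed actions. -/
abbrev TWord (Act : Type) := List (TAct Act)

/-- Well-formed timed word: no two adjacent delays (reals). -/
def IsTWord {Act : Type} (w : TWord Act) : Prop :=
  List.Chain' (fun x y => ¬ (TAct.isDelay x ∧ TAct.isDelay y)) w

/-- Well-formed timed word over the alphabet `A`. -/
def ValidW {Act : Type} (A : Set Act) (w : TWord Act) : Prop :=
  IsTWord w ∧ ∀ α ∈ w, TAct.valid A α

/-- Concatenation of timed words, coalescing (summing) adjacent delays. -/
def tcat {Act : Type} (w w' : TWord Act) : TWord Act :=
  match w.getLast?, w' with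
  | some (TAct.delay d), TAct.delay e :: rest => w.dropLast ++ TAct.delay (dsum d e) :: rest
  | _, _ => w ++ w'

/-- `Pref w₀ w`: `w₀` is a prefix of `w` (w.r.t. coalescing concatenation). -/
def Pref {Act : Type} (w₀ w : TWord Act) : Prop := ∃ w₁, tcat w₀ w₁ = w

/-- Strict prefix. -/
def SPref {Act : Type} (w₀ w : TWord Act) : Prop := Pref w₀ w ∧ w₀ ≠ w

/-- `X · tA*`: all extensions of words in `X` by timed words over the alphabet `A`. -/
def Ext {Act : Type} (A : Set Act) (X : Set (TWord Act)) : Set (TWord Act) :=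
  {w | ∃ w₀ ∈ X, ∃ w₁, ValidW A w₁ ∧ w = tcat w₀ w₁}

/-- `X · ℝ≥0`: all extensions of words in `X` by a (possibly zero) delay. -/
def ExtDelay {Act : Type} (X : Set (TWord Act)) : Set (TWord Act) :=
  X ∪ {w | ∃ w₀ ∈ X, ∃ d : Delay, w = tcat w₀ [TAct.delay d]}

/-- `w` is a time-extension of `w₀`: equal, or extended by a single delay. -/
def TimeExt {Act : Type} (w₀ w : TWord Act) : Prop :=
  w = w₀ ∨ ∃ d : Delay, w = tcat w₀ [TAct.delay d]

/-- States of a TIOTS: plain states together with the inconsistent state `⊥`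
and the timestop state `⊤`. -/
inductive St (σ : Type) : Type where
  | plain : σ → St σ
  | bot : St σ
  | top : St σ

/-- Map a function on plain states over `St`, preserving `⊥` and `⊤`. -/
def St.map {σ τ : Type} (f : σ → τ) : St σ → St τ
  | .plain p => .plain (f p)
  | .bot => .bot
  | .top => .top

/-- Interchange `⊤` and `⊥`. -/
def St.swap {σ : Type} : St σ → St σ
  | .plain p => .plain p
  | .bot => .top
  | .top => .bot

/-- Timed I/O transition system over action alphabet `Act`:
inputs `I`, outputs `O`, plain-state type `Sig`, initial state, and a
transition relation labelled by timed actions. -/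
structure TIOTS (Act : Type) : Type 1 where
  Sig : Type
  I : Set Act
  O : Set Act
  init : St Sig
  tr : St Sig → TAct Act → St Sig → Prop

/-- Full (visible) alphabet of a TIOTS. -/
def TIOTS.A {Act : Type} (P : TIOTS Act) : Set Act := P.I ∪ P.O

/-- Well-formedness: disjoint inputs/outputs, alphabet-respecting transitions,
`⊤` quiescent (exactly the delay self-loops), `⊥` chaotic (exactly the
self-loops for each timed action of the alphabet), and time additivity. -/
def WF {Act : Type} (P : TIOTS Act) : Prop :=
  Disjoint P.I P.O ∧
  (∀ s α s', P.tr s α s' → TAct.valid P.A α) ∧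
  (∀ α (s' : St P.Sig), P.tr .top α s' ↔ (TAct.isDelay α ∧ s' = .top)) ∧
  (∀ α (s' : St P.Sig), P.tr .bot α s' ↔ (TAct.valid P.A α ∧ s' = .bot)) ∧
  (∀ (p : P.Sig) (d e : Delay) (s' : St P.Sig),
      P.tr (.plain p) (.delay (dsum d e)) s' ↔
        ∃ s, P.tr (.plain p) (.delay d) s ∧ P.tr s (.delay e) s')

/-- Determinism: no ambiguous transitions. -/
def Deterministic {Act : Type} (P : TIOTS Act) : Prop :=
  ∀ s α s' s'', P.tr s α s' → P.tr s α s'' → s' = s''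

/-- `α` is enabled at state `s`. -/
def enabled {Act : Type} (P : TIOTS Act) (s : St P.Sig) (α : TAct Act) : Prop :=
  ∃ s', P.tr s α s'

/-- `⊥`-completion: add `p →a ⊥` for every plain state `p` and input `a` not enabled at `p`. -/
def botComplete {Act : Type} (P : TIOTS Act) : TIOTS Act :=
  { P with
    tr := fun s α s' =>
      P.tr s α s' ∨
        ((∃ p, s = St.plain p) ∧ (∃ a ∈ P.I, α = TAct.act a) ∧ ¬ enabled P s α ∧ s' = .bot) }

/-- `⊤`-completion: add `p →α ⊤` for every plain state `p` and timed output `α ∈ tO`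
not enabled at `p`. -/
def topComplete {Act : Type} (P : TIOTS Act) : TIOTS Act :=
  { P with
    tr := fun s α s' =>
      P.tr s α s' ∨
        ((∃ p, s = St.plain p) ∧ TAct.valid P.O α ∧ ¬ enabled P s α ∧ s' = .top) }

/-- `(P^⊥)^⊤`. -/
def TIOTS.complete {Act : Type} (P : TIOTS Act) : TIOTS Act := topComplete (botComplete P)

/-- Finite executions: `Exec P s w s'` holds when there is a finite execution from
`s` to `s'` whose trace (labels with adjacent delays coalesced) is `w`. -/
inductive Exec {Act : Type} (P : TIOTS Act) : St P.Sig → TWord Act → St P.Sig → Prop where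
  | nil (s : St P.Sig) : Exec P s [] s
  | cons {s : St P.Sig} {α : TAct Act} {s' : St P.Sig} {w : TWord Act} {s'' : St P.Sig} :
      P.tr s α s' → Exec P s' w s'' → Exec P s (tcat [α] w) s''

/-- `s` is reachable from the initial state via trace `w`. -/
def Reach {Act : Type} (P : TIOTS Act) (w : TWord Act) (s : St P.Sig) : Prop :=
  Exec P P.init w s

/-- `⊥`-freeness: `⊥` is not reachable from the initial state. -/
def BotFree {Act : Type} (P : TIOTS Act) : Prop := ∀ w, ¬ Reach P w .bot

/-- Error traces of `P`: traces of `(P^⊥)^⊤` leading to `⊥`. -/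
def TEset {Act : Type} (P : TIOTS Act) : Set (TWord Act) := {w | Reach P.complete w .bot}

/-- Magic traces of `P`: traces of `(P^⊥)^⊤` leading to `⊤`. -/
def TMset {Act : Type} (P : TIOTS Act) : Set (TWord Act) := {w | Reach P.complete w .top}

/-- Plain traces of `P`: traces of `(P^⊥)^⊤` leading to a plain state. -/
def TPset {Act : Type} (P : TIOTS Act) : Set (TWord Act) :=
  {w | ∃ p, Reach P.complete w (St.plain p)}

/-- Realisable traces: `TR = TE ∪ TP`. -/
def TRset {Act : Type} (P : TIOTS Act) : Set (TWord Act) := TEset P ∪ TPset P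

/-- All traces: `TT = TE ∪ TP ∪ TM`. -/
def TTset {Act : Type} (P : TIOTS Act) : Set (TWord Act) := TEset P ∪ TPset P ∪ TMset P

/-- Composite plain-state space for binary operators: lone left states, lone right
states, and product states. -/
def CState (σ₀ σ₁ : Type) : Type := σ₀ ⊕ σ₁ ⊕ σ₀ × σ₁

def pairSt {σ₀ σ₁ : Type} (p : σ₀) (q : σ₁) : CState σ₀ σ₁ := Sum.inr (Sum.inr (p, q))

def embL {σ₀ σ₁ : Type} : St σ₀ → St (CState σ₀ σ₁) := St.map (fun p => Sum.inl p)

def embR {σ₀ σ₁ : Type} : St σ₁ → St (CState σ₀ σ₁) := St.map (fun q => Sum.inr (Sum.inl q))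

/-- State table for parallel composition: `⊤` if either is `⊤`, otherwise `⊥`
if either is `⊥`, otherwise the pair. -/
def stPar {σ₀ σ₁ : Type} : St σ₀ → St σ₁ → St (CState σ₀ σ₁)
  | .top, _ => .top
  | _, .top => .top
  | .bot, _ => .bot
  | _, .bot => .bot
  | .plain p, .plain q => .plain (pairSt p q)

/-- State table for conjunction: `⊤` if either is `⊤`, otherwise the other
operand if either is `⊥`, otherwise the pair. -/
def stAnd {σ₀ σ₁ : Type} : St σ₀ → St σ₁ → St (CState σ₀ σ₁)
  | .top, _ => .top
  | _, .top => .top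
  | .bot, .bot => .bot
  | .bot, .plain q => .plain (Sum.inr (Sum.inl q))
  | .plain p, .bot => .plain (Sum.inl p)
  | .plain p, .plain q => .plain (pairSt p q)

/-- State table for disjunction: `⊥` if either is `⊥`, otherwise the other
operand if either is `⊤`, otherwise the pair. -/
def stOr {σ₀ σ₁ : Type} : St σ₀ → St σ₁ → St (CState σ₀ σ₁)
  | .bot, _ => .bot
  | _, .bot => .bot
  | .top, .top => .top
  | .top, .plain q => .plain (Sum.inr (Sum.inl q))
  | .plain p, .top => .plain (Sum.inl p)
  | .plain p, .plain q => .plain (pairSt p q)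

/-- State table for quotient `s₀ % s₁`: `⊥` if `s₁ = ⊤`, or if `s₀ = ⊥` and `s₁ ≠ ⊤`;
`⊤` if `s₁ = ⊥` and `s₀ ≠ ⊥`, or if `s₀ = ⊤` and `s₁` plain; the pair if both plain. -/
def stQuo {σ₀ σ₁ : Type} : St σ₀ → St σ₁ → St (CState σ₀ σ₁)
  | _, .top => .bot
  | .bot, _ => .bot
  | _, .bot => .top
  | .top, .plain _ => .top
  | .plain p, .plain q => .plain (pairSt p q)

/-- Synchronised product of two (already `⊥`- and `⊤`-completed) TIOTSs, with the
given state-combination table and alphabets. The transition relation contains the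
embedded component transitions (on lone states); from product states, shared
actions and all delays synchronise while independent visible actions interleave;
`⊥` is chaotic and `⊤` quiescent. -/
def rawProd {Act : Type} (P Q : TIOTS Act)
    (comb : St P.Sig → St Q.Sig → St (CState P.Sig Q.Sig)) (I O : Set Act) : TIOTS Act where
  Sig := CState P.Sig Q.Sig
  I := I
  O := O
  init := comb P.init Q.init
  tr := fun s α s' =>
    (∃ p s₀, s = St.plain (Sum.inl p) ∧ P.tr (.plain p) α s₀ ∧ s' = embL s₀) ∨
    (∃ q s₁, s = St.plain (Sum.inr (Sum.inl q)) ∧ Q.tr (.plain q) α s₁ ∧ s' = embR s₁) ∨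
    (∃ p q, s = St.plain (pairSt p q) ∧
      ((TAct.valid (P.A ∩ Q.A) α ∧
          ∃ (s₀ : St P.Sig) (s₁ : St Q.Sig),
            P.tr (.plain p) α s₀ ∧ Q.tr (.plain q) α s₁ ∧ s' = comb s₀ s₁) ∨
       (∃ a, α = TAct.act a ∧ a ∈ P.A \ Q.A ∧
          ∃ s₀ : St P.Sig, P.tr (.plain p) α s₀ ∧ s' = comb s₀ (.plain q)) ∨
       (∃ a, α = TAct.act a ∧ a ∈ Q.A \ P.A ∧
          ∃ s₁ : St Q.Sig, Q.tr (.plain q) α s₁ ∧ s' = comb (.plain p) s₁))) ∨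
    (s = .bot ∧ TAct.valid (I ∪ O) α ∧ s' = .bot) ∨
    (s = .top ∧ TAct.isDelay α ∧ s' = .top)

/-- Parallel composition `P ∥ Q` (requires `∥`-composability: disjoint output sets). -/
def parC {Act : Type} (P Q : TIOTS Act) : TIOTS Act :=
  rawProd P.complete Q.complete stPar ((P.I ∪ Q.I) \ (P.O ∪ Q.O)) (P.O ∪ Q.O)

/-- Conjunction `P ∧ Q` (requires identical alphabets). -/
def andC {Act : Type} (P Q : TIOTS Act) : TIOTS Act :=
  rawProd P.complete Q.complete stAnd P.I P.O

/-- Disjunction `P ∨ Q` (requires identical alphabets). -/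
def orC {Act : Type} (P Q : TIOTS Act) : TIOTS Act :=
  rawProd P.complete Q.complete stOr P.I P.O

/-- Reduction of a subset of states in the subset construction: a subset containing
`⊥` becomes `⊥`; `⊤` is removed from any subset other than `{⊤}`. -/
noncomputable def detSt {σ : Type} (X : Set (St σ)) : St (Set σ) :=
  if St.bot ∈ X then .bot
  else if X = {St.top} then .top
  else .plain {p | St.plain p ∈ X}

/-- Successor subset. -/
def post {Act : Type} (P : TIOTS Act) (X : Set P.Sig) (α : TAct Act) : Set (St P.Sig) :=
  {s' | ∃ p ∈ X, P.tr (.plain p) α s'}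

/-- Determinisation `P^D` by subset construction on `(P^⊥)^⊤`. -/
noncomputable def TIOTS.det {Act : Type} (P : TIOTS Act) : TIOTS Act where
  Sig := Set P.Sig
  I := P.I
  O := P.O
  init := detSt {P.complete.init}
  tr := fun s α s' =>
    (∃ X, s = St.plain X ∧ TAct.valid P.A α ∧ s' = detSt (post P.complete X α)) ∨
    (s = .bot ∧ TAct.valid P.A α ∧ s' = .bot) ∨
    (s = .top ∧ TAct.isDelay α ∧ s' = .top)

/-- Mirror `P¬`: determinise, then interchange inputs with outputs and `⊤` with `⊥`. -/
noncomputable def TIOTS.mirror {Act : Type} (P : TIOTS Act) : TIOTS Act where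
  Sig := (P.det).Sig
  I := P.O
  O := P.I
  init := St.swap (P.det).init
  tr := fun s α s' => (P.det).tr (St.swap s) α (St.swap s')

/-- Alphabet domination: `A_Q ⊆ A_P` and `O_Q ⊆ O_P`. -/
def Dominates {Act : Type} (P Q : TIOTS Act) : Prop := Q.A ⊆ P.A ∧ Q.O ⊆ P.O

/-- Quotient `P % Q` (requires that `P` dominates `Q`); `Q` is determinised first. -/
noncomputable def quoC {Act : Type} (P Q : TIOTS Act) : TIOTS Act :=
  rawProd P.complete (Q.det).complete stQuo (P.I ∪ Q.O) (P.O \ Q.O)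

/-- `Q` is an environment for `P`: complementary alphabets. -/
def Env {Act : Type} (P Q : TIOTS Act) : Prop := Q.I = P.O ∧ Q.O = P.I

/-- Substitutive refinement: `Refines P Q` means `P ⊑ Q`, i.e. the alphabets agree and
for every environment `R`, `⊥`-freeness of `P ∥ R` implies `⊥`-freeness of `Q ∥ R`. -/
def Refines {Act : Type} (P Q : TIOTS Act) : Prop :=
  P.I = Q.I ∧ P.O = Q.O ∧
  ∀ R : TIOTS Act, WF R → Env P R → BotFree (parC P R) → BotFree (parC Q R)

/-- Substitutive equivalence `P ≃ Q`. -/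
def SEquiv {Act : Type} (P Q : TIOTS Act) : Prop := Refines P Q ∧ Refines Q P

/-- Enabled timed actions at a plain state. -/
def eb {Act : Type} (G : TIOTS Act) (p : G.Sig) : Set (TAct Act) :=
  {α | enabled G (.plain p) α}

/-- The component move(s) proposed at a plain state: enabled outputs and delays. -/
def mvSet {Act : Type} (G : TIOTS Act) (p : G.Sig) : Set (TAct Act) :=
  {α | enabled G (.plain p) α ∧ TAct.valid G.O α}

/-- One-step relation between plain states. -/
def plainStep {Act : Type} (G : TIOTS Act) (p p' : G.Sig) : Prop :=
  ∃ α, G.tr (.plain p) α (.plain p')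

/-- Tree TIOTS: acyclic (on plain states), no state is the target of both an action-
and a delay-transition, action transitions into the same state coincide, and delay
transitions into the same state have the same source. -/
def IsTree {Act : Type} (G : TIOTS Act) : Prop :=
  (∀ p, ¬ Relation.TransGen (plainStep G) p p) ∧
  (∀ p p' p'' a d, G.tr (.plain p) (TAct.act a) (.plain p'') →
      G.tr (.plain p') (TAct.delay d) (.plain p'') → False) ∧
  (∀ p p' p'' a b, G.tr (.plain p) (TAct.act a) (.plain p'') →
      G.tr (.plain p') (TAct.act b) (.plain p'') → p = p' ∧ a = b) ∧
  (∀ p p' p'' d, G.tr (.plain p) (TAct.delay d) (.plain p'') →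
      G.tr (.plain p') (TAct.delay d) (.plain p'') → p = p')

/-- Strategy: a deterministic tree TIOTS in which every plain state enables exactly
the inputs together with a unique component move, the move being a single output or
a nonempty set of delays. -/
def IsStrategy {Act : Type} (G : TIOTS Act) : Prop :=
  WF G ∧ Deterministic G ∧ IsTree G ∧
  ∀ p : G.Sig,
    eb G p = {α | ∃ a ∈ G.I, α = TAct.act a} ∪ mvSet G p ∧
    ((∃ a ∈ G.O, mvSet G p = {TAct.act a}) ∨
      ((mvSet G p).Nonempty ∧ ∀ α ∈ mvSet G p, TAct.isDelay α))

/-- `G` is a partial unfolding of `Q`: a state map preserving `⊥`, `⊤`, plainness,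
the initial state and the transitions. -/
def PartialUnfolding {Act : Type} (G Q : TIOTS Act) : Prop :=
  G.I = Q.I ∧ G.O = Q.O ∧
  ∃ f : G.Sig → Q.Sig,
    St.map f G.init = Q.init ∧
    ∀ (p : G.Sig) (α : TAct Act) (s' : St G.Sig),
      G.tr (.plain p) α s' → Q.tr (.plain (f p)) α (St.map f s')

/-- Strategies contained in `P`: partial unfoldings of `(P^⊥)^⊤`. -/
def stg {Act : Type} (P : TIOTS Act) : Set (TIOTS Act) :=
  {G | IsStrategy G ∧ PartialUnfolding G P.complete}

/-- Affinity: identical alphabets and equal proposed moves after equal traces. -/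
def Affine {Act : Type} (G G' : TIOTS Act) : Prop :=
  G.I = G'.I ∧ G.O = G'.O ∧
  ∀ (w : TWord Act) (p : G.Sig) (p' : G'.Sig),
    Reach G w (.plain p) → Reach G' w (.plain p') → mvSet G p = mvSet G' p'

/-- Aggressiveness order `G ≼ G'` on affine strategies: `G` reaches `⊥` faster and
`⊤` slower than `G'`. -/
def Agg {Act : Type} (G G' : TIOTS Act) : Prop :=
  Affine G G' ∧
  (∀ w, Reach G' w .bot → ∃ w₀, Pref w₀ w ∧ Reach G w₀ .bot) ∧
  (∀ w, Reach G w .top → ∃ w₀, Pref w₀ w ∧ Reach G' w₀ .top)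

/-- Strategy semantics `[P]_s`: upward closure of `stg(P)` w.r.t. `≼`. -/
def ssem {Act : Type} (P : TIOTS Act) : Set (TIOTS Act) :=
  {G' | IsStrategy G' ∧ ∃ G ∈ stg P, Agg G G'}

/-- Strategy disjunction `G + G'` of (affine) strategies: their synchronised
`∨`-product, without further completion. -/
def stratPlus {Act : Type} (G G' : TIOTS Act) : TIOTS Act := rawProd G G' stOr G.I G.O

/-- Isomorphism of TIOTSs. -/
def TIso {Act : Type} (P Q : TIOTS Act) : Prop :=
  P.I = Q.I ∧ P.O = Q.O ∧
  ∃ e : P.Sig ≃ Q.Sig,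
    St.map (fun x => e x) P.init = Q.init ∧
    ∀ s α s', P.tr s α s' ↔ Q.tr (St.map (fun x => e x) s) α (St.map (fun x => e x) s')

/-- Disjunction closure of a set of strategies (strategies are identified up to
isomorphism): least superset closed under `+` of affine pairs. -/
inductive DClos {Act : Type} (S : Set (TIOTS Act)) : TIOTS Act → Prop where
  | base {G} : G ∈ S → DClos S G
  | disj {G G'} : DClos S G → DClos S G' → Affine G G' → DClos S (stratPlus G G')
  | iso {G G'} : DClos S G → TIso G G' → DClos S G'

/-- Disjunction closure `Π⁺` as a set. -/
def dclos {Act : Type} (S : Set (TIOTS Act)) : Set (TIOTS Act) := {G | DClos S G}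

/-- `[P]_s⁺`. -/
def sClos {Act : Type} (P : TIOTS Act) : Set (TIOTS Act) := dclos (ssem P)

/-- Coin strategies: functions from histories to `{0,1}`. -/
abbrev Coin (Act : Type) := TWord Act → Bool

/-- The strategy proposes output `a` at `p`. -/
def proposesA {Act : Type} (G : TIOTS Act) (p : G.Sig) (a : Act) : Prop :=
  TAct.act a ∈ mvSet G p

/-- The strategy proposes delay `d` at `p`. -/
def proposesD {Act : Type} (G : TIOTS Act) (p : G.Sig) (d : Delay) : Prop :=
  TAct.delay d ∈ mvSet G p

/-- Game-state combination for plays (game states carry the history). -/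
def stPlay {Act : Type} {σ₀ σ₁ : Type} (w : TWord Act) :
    St σ₀ → St σ₁ → St (σ₀ × σ₁ × TWord Act)
  | .top, _ => .top
  | _, .top => .top
  | .bot, _ => .bot
  | _, .bot => .bot
  | .plain p, .plain q => .plain (p, q, w)

/-- A component fires `α` if `α` is in its timed alphabet, and stays put otherwise. -/
def stepOrStay {Act : Type} (G : TIOTS Act) (p : G.Sig) (α : TAct Act) (s : St G.Sig) : Prop :=
  (TAct.valid G.A α ∧ G.tr (.plain p) α s) ∨ (¬ TAct.valid G.A α ∧ s = .plain p)

/-- Inputs that fire autonomously at a game state: synchronised inputs and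
independent inputs. -/
def firedInput {Act : Type} (GP GQ : TIOTS Act) (a : Act) : Prop :=
  a ∈ GP.I ∩ GQ.I ∨ (a ∈ GP.I ∪ GQ.I ∧ a ∉ GP.A ∩ GQ.A)

/-- The timed action `α` fires at game state `(p, q)` with history `w`: it is a fired
input, or a prevailing component move (an action prevails over a delay, the common
delays prevail when both propose delays, and the coin `h` resolves ties between two
proposed actions: `false` lets the left strategy win). -/
def fired {Act : Type} (GP GQ : TIOTS Act) (h : Coin Act) (p : GP.Sig) (q : GQ.Sig)
    (w : TWord Act) : TAct Act → Prop
  | TAct.act a =>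
      firedInput GP GQ a ∨
      (proposesA GP p a ∧ ((∃ b, proposesA GQ q b) → h w = false)) ∨
      (proposesA GQ q a ∧ ((∃ b, proposesA GP p b) → h w = true))
  | TAct.delay d => proposesD GP p d ∧ proposesD GQ q d

/-- The play `G_P ∥_h G_Q` of two strategies with composable alphabets against a
coin strategy `h`: a tree TIOTS over game states carrying histories. -/
def play {Act : Type} (GP GQ : TIOTS Act) (h : Coin Act) : TIOTS Act where
  Sig := GP.Sig × GQ.Sig × TWord Act
  I := (GP.I ∪ GQ.I) \ (GP.O ∪ GQ.O)
  O := GP.O ∪ GQ.O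
  init := stPlay [] GP.init GQ.init
  tr := fun s α s' =>
    (∃ p q w, s = St.plain (p, q, w) ∧ fired GP GQ h p q w α ∧
      ∃ (s₀ : St GP.Sig) (s₁ : St GQ.Sig),
        stepOrStay GP p α s₀ ∧ stepOrStay GQ q α s₁ ∧
        s' = stPlay (tcat w [α]) s₀ s₁) ∨
    (s = .bot ∧ TAct.valid (GP.A ∪ GQ.A) α ∧ s' = .bot) ∨
    (s = .top ∧ TAct.isDelay α ∧ s' = .top)

/-- Projection of a timed word onto a sub-alphabet: delete visible actions outside
the sub-alphabet and coalesce adjacent delays. -/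
noncomputable def projW {Act : Type} (A : Set Act) (w : TWord Act) : TWord Act :=
  w.foldr (fun α acc =>
    match α with
    | TAct.act a => if a ∈ A then tcat [TAct.act a] acc else acc
    | TAct.delay d => tcat [TAct.delay d] acc) []


/-! ### Auxiliary development for `traces_mirror` -/

section MirrorAux

variable {Act : Type}

/-- Single-step (per-symbol) executions: one transition per list entry. -/
inductive SExec (Q : TIOTS Act) : St Q.Sig → List (TAct Act) → St Q.Sig → Prop where
  | nil (s : St Q.Sig) : SExec Q s [] s
  | cons {s : St Q.Sig} {α : TAct Act} {s' : St Q.Sig} {v : List (TAct Act)} {t : St Q.Sig} :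
      Q.tr s α s' → SExec Q s' v t → SExec Q s (α :: v) t

/-- Normalisation of a step-label list into a timed word. -/
def normW (v : List (TAct Act)) : TWord Act :=
  v.foldr (fun α acc => tcat [α] acc) []

lemma tcat_act_cons (a : Act) (w : TWord Act) :
    tcat [TAct.act a] w = TAct.act a :: w := by
  cases w with
  | nil => rfl
  | cons β w' => cases β <;> rfl

lemma tcat_delay_nil (d : Delay) : tcat [TAct.delay d] ([] : TWord Act) = [TAct.delay d] := rfl

lemma tcat_delay_act (d : Delay) (a : Act) (w : TWord Act) :
    tcat [TAct.delay d] (TAct.act a :: w) = TAct.delay d :: TAct.act a :: w := rfl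

lemma tcat_delay_delay (d e : Delay) (w : TWord Act) :
    tcat [TAct.delay d] (TAct.delay e :: w) = TAct.delay (dsum d e) :: w := rfl

lemma tcat_single_ne_nil (α : TAct Act) (w : TWord Act) : tcat [α] w ≠ [] := by
  cases α with
  | act a => rw [tcat_act_cons]; simp
  | delay d =>
    cases w with
    | nil => rw [tcat_delay_nil]; simp
    | cons β w' =>
      cases β with
      | act a => rw [tcat_delay_act]; simp
      | delay e => rw [tcat_delay_delay]; simp

lemma tcat_single_not_head_delay {α : TAct Act} {w : TWord Act}
    (h : ¬ (TAct.isDelay α ∧ ∃ e w', w = TAct.delay e :: w')) :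
    tcat [α] w = α :: w := by
  cases α with
  | act a => exact tcat_act_cons a w
  | delay d =>
    cases w with
    | nil => exact tcat_delay_nil d
    | cons β w' =>
      cases β with
      | act a => exact tcat_delay_act d a w'
      | delay e => exact absurd ⟨trivial, e, w', rfl⟩ h

lemma val_tcat_single {A : Set Act} {α : TAct Act} {w : TWord Act}
    (hα : TAct.valid A α) (hw : ∀ γ ∈ w, TAct.valid A γ) :
    ∀ γ ∈ tcat [α] w, TAct.valid A γ := by
  cases α with
  | act a =>
    rw [tcat_act_cons]; intro γ hγ
    rcases List.mem_cons.1 hγ with h | h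
    · exact h ▸ hα
    · exact hw _ h
  | delay d =>
    cases w with
    | nil => intro γ hγ; rw [tcat_delay_nil] at hγ; simp at hγ; exact hγ ▸ hα
    | cons β w' =>
      cases β with
      | act a =>
        rw [tcat_delay_act]; intro γ hγ
        rcases List.mem_cons.1 hγ with h | h
        · exact h ▸ hα
        · exact hw _ h
      | delay e =>
        rw [tcat_delay_delay]; intro γ hγ
        rcases List.mem_cons.1 hγ with h | h
        · exact h ▸ trivial
        · exact hw _ (List.mem_cons_of_mem _ h)

lemma isTWord_tcat_single {α : TAct Act} {w : TWord Act} (hw : IsTWord w) :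
    IsTWord (tcat [α] w) := by
  cases α with
  | act a =>
    rw [tcat_act_cons]
    refine List.isChain_cons.2 ⟨?_, hw⟩
    intro y _ hy; exact hy.1
  | delay d =>
    cases w with
    | nil => rw [tcat_delay_nil]; exact List.isChain_singleton _
    | cons β w' =>
      cases β with
      | act a =>
        rw [tcat_delay_act]
        refine List.isChain_cons_cons.2 ⟨fun hc => hc.2, hw⟩
      | delay e =>
        rw [tcat_delay_delay]
        unfold IsTWord List.Chain' at hw ⊢; rw [List.isChain_cons] at hw ⊢
        refine ⟨fun y hy => ?_, hw.2⟩
        intro hc; exact hw.1 y hy ⟨trivial, hc.2⟩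

lemma normW_isTWord (v : List (TAct Act)) : IsTWord (normW v) := by
  induction v with
  | nil => exact List.isChain_nil
  | cons α v ih => exact isTWord_tcat_single ih

lemma normW_eq_self {w : TWord Act} (hw : IsTWord w) : normW w = w := by
  induction w with
  | nil => rfl
  | cons α w ih =>
    have hw' : IsTWord w := hw.tail
    rw [normW, List.foldr_cons]
    show tcat [α] (normW w) = α :: w
    rw [ih hw']
    refine tcat_single_not_head_delay ?_
    rintro ⟨hα, e, w', rfl⟩
    have := (List.isChain_cons.1 hw).1 (TAct.delay e) rfl
    exact this ⟨hα, trivial⟩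

lemma val_normW {A : Set Act} {v : List (TAct Act)}
    (hv : ∀ γ ∈ v, TAct.valid A γ) : ∀ γ ∈ normW v, TAct.valid A γ := by
  induction v with
  | nil => intro γ hγ; simp [normW] at hγ
  | cons α v ih =>
    exact val_tcat_single (hv α (List.mem_cons_self))
      (ih fun γ hγ => hv γ (List.mem_cons_of_mem _ hγ))

/-- Every execution's trace is a well-formed timed word. -/
lemma exec_isTWord {Q : TIOTS Act} {s : St Q.Sig} {w : TWord Act} {t : St Q.Sig}
    (h : Exec Q s w t) : IsTWord w := by
  induction h with
  | nil => exact List.isChain_nil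
  | cons _ _ ih => exact isTWord_tcat_single ih

lemma exec_valid {Q : TIOTS Act} {A : Set Act}
    (hQ : ∀ s α t, Q.tr s α t → TAct.valid A α)
    {s : St Q.Sig} {w : TWord Act} {t : St Q.Sig} (h : Exec Q s w t) :
    ∀ γ ∈ w, TAct.valid A γ := by
  induction h with
  | nil => intro γ hγ; simp at hγ
  | cons htr _ ih => exact val_tcat_single (hQ _ _ _ htr) ih

lemma exec_nil_eq {Q : TIOTS Act} {s t : St Q.Sig} (h : Exec Q s [] t) : s = t := by
  generalize hw : ([] : TWord Act) = w at h
  cases h with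
  | nil => rfl
  | cons htr he => exact absurd hw.symm (tcat_single_ne_nil _ _)

lemma sexec_valid {Q : TIOTS Act} {A : Set Act}
    (hQ : ∀ s α t, Q.tr s α t → TAct.valid A α)
    {s : St Q.Sig} {v : List (TAct Act)} {t : St Q.Sig} (h : SExec Q s v t) :
    ∀ γ ∈ v, TAct.valid A γ := by
  induction h with
  | nil => intro γ hγ; simp at hγ
  | cons htr _ ih =>
    intro γ hγ
    rcases List.mem_cons.1 hγ with h | h
    · exact h ▸ hQ _ _ _ htr
    · exact ih γ h

/-- Executions are exactly single-step executions up to normalisation. -/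
lemma exec_iff_sexec {Q : TIOTS Act} {s : St Q.Sig} {w : TWord Act} {t : St Q.Sig} :
    Exec Q s w t ↔ ∃ v, normW v = w ∧ SExec Q s v t := by
  constructor
  · intro h
    induction h with
    | nil => exact ⟨[], rfl, SExec.nil _⟩
    | cons htr _ ih =>
      obtain ⟨v, hv, hs⟩ := ih
      exact ⟨_ :: v, by rw [normW, List.foldr_cons]; rw [← hv]; rfl, SExec.cons htr hs⟩
  · rintro ⟨v, rfl, hs⟩
    induction hs with
    | nil => exact Exec.nil _
    | cons htr _ ih => exact Exec.cons htr ih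

end MirrorAux

section CompleteFacts
set_option linter.unusedSectionVars false

variable {Act : Type} {P : TIOTS Act}

lemma c_tr_iff (P : TIOTS Act) (s : St P.Sig) (α : TAct Act) (t : St P.Sig) :
    P.complete.tr s α t ↔
      (P.tr s α t ∨
        ((∃ p, s = St.plain p) ∧ (∃ a ∈ P.I, α = TAct.act a) ∧ ¬ enabled P s α ∧ t = .bot) ∨
        ((∃ p, s = St.plain p) ∧ TAct.valid P.O α ∧ ¬ enabled (botComplete P) s α ∧
          t = .top)) := by
  show ((P.tr s α t ∨ _) ∨ _) ↔ _
  rw [or_assoc]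
  exact Iff.rfl

lemma enabled_bc_iff (P : TIOTS Act) (s : St P.Sig) (α : TAct Act) :
    enabled (botComplete P) s α ↔
      (enabled P s α ∨
        ((∃ p, s = St.plain p) ∧ (∃ a ∈ P.I, α = TAct.act a) ∧ ¬ enabled P s α)) := by
  constructor
  · rintro ⟨t, ht | ⟨h1, h2, h3, h4⟩⟩
    · exact Or.inl ⟨t, ht⟩
    · exact Or.inr ⟨h1, h2, h3⟩
  · rintro (⟨t, ht⟩ | ⟨h1, h2, h3⟩)
    · exact ⟨t, Or.inl ht⟩
    · exact ⟨.bot, Or.inr ⟨h1, h2, h3, rfl⟩⟩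

lemma enabled_bc_delay (P : TIOTS Act) (s : St P.Sig) (d : Delay) :
    enabled (botComplete P) s (.delay d) ↔ enabled P s (.delay d) := by
  rw [enabled_bc_iff]
  constructor
  · rintro (h | ⟨_, ⟨a, _, ha⟩, _⟩)
    · exact h
    · exact absurd ha (by simp)
  · exact Or.inl

variable (hP : WF P)
include hP

lemma c_bot_iff (α : TAct Act) (t : St P.Sig) :
    P.complete.tr .bot α t ↔ TAct.valid P.A α ∧ t = .bot := by
  refine (c_tr_iff P _ _ _).trans ?_
  constructor
  · rintro (h | ⟨⟨p, hp⟩, _⟩ | ⟨⟨p, hp⟩, _⟩)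
    · exact (hP.2.2.2.1 α t).1 h
    · exact absurd hp (by simp)
    · exact absurd hp (by simp)
  · intro h
    exact Or.inl ((hP.2.2.2.1 α t).2 h)

lemma c_top_iff (α : TAct Act) (t : St P.Sig) :
    P.complete.tr .top α t ↔ TAct.isDelay α ∧ t = .top := by
  refine (c_tr_iff P _ _ _).trans ?_
  constructor
  · rintro (h | ⟨⟨p, hp⟩, _⟩ | ⟨⟨p, hp⟩, _⟩)
    · exact (hP.2.2.1 α t).1 h
    · exact absurd hp (by simp)
    · exact absurd hp (by simp)
  · intro h
    exact Or.inl ((hP.2.2.1 α t).2 h)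

lemma c_plain_delay_iff (p : P.Sig) (d : Delay) (t : St P.Sig) :
    P.complete.tr (.plain p) (.delay d) t ↔
      (P.tr (.plain p) (.delay d) t ∨ (¬ enabled P (.plain p) (.delay d) ∧ t = .top)) := by
  refine (c_tr_iff P _ _ _).trans ?_
  constructor
  · rintro (h | ⟨_, ⟨a, _, ha⟩, _⟩ | ⟨_, _, h3, h4⟩)
    · exact Or.inl h
    · exact absurd ha (by simp)
    · exact Or.inr ⟨(enabled_bc_delay P _ d).not.1 h3, h4⟩
  · rintro (h | ⟨h1, h2⟩)
    · exact Or.inl h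
    · exact Or.inr (Or.inr ⟨⟨p, rfl⟩, trivial, (enabled_bc_delay P _ d).not.2 h1, h2⟩)

lemma valid_O_to_A {α : TAct Act} (h : TAct.valid P.O α) : TAct.valid P.A α := by
  cases α with
  | act a => exact Or.inr h
  | delay d => trivial

lemma c_valid {s : St P.Sig} {α : TAct Act} {t : St P.Sig}
    (h : P.complete.tr s α t) : TAct.valid P.A α := by
  rw [c_tr_iff] at h
  rcases h with h | ⟨_, ⟨a, ha, rfl⟩, _⟩ | ⟨_, h2, _⟩
  · exact hP.2.1 _ _ _ h
  · exact Or.inl ha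
  · exact valid_O_to_A hP h2

lemma c_plain_enabled (p : P.Sig) {α : TAct Act} (hα : TAct.valid P.A α) :
    ∃ t, P.complete.tr (.plain p) α t := by
  cases α with
  | act a =>
    rcases hα with ha | ha
    · by_cases h : enabled P (.plain p) (.act a)
      · obtain ⟨t, ht⟩ := h
        exact ⟨t, (c_tr_iff P _ _ _).2 (Or.inl ht)⟩
      · exact ⟨.bot, (c_tr_iff P _ _ _).2 (Or.inr (Or.inl ⟨⟨p, rfl⟩, ⟨a, ha, rfl⟩, h, rfl⟩))⟩
    · by_cases h : enabled (botComplete P) (.plain p) (.act a)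
      · obtain ⟨t, ht⟩ := h
        exact ⟨t, Or.inl ht⟩
      · exact ⟨.top, Or.inr ⟨⟨p, rfl⟩, ha, h, rfl⟩⟩
  | delay d =>
    by_cases h : enabled P (.plain p) (.delay d)
    · obtain ⟨t, ht⟩ := h
      exact ⟨t, (c_tr_iff P _ _ _).2 (Or.inl ht)⟩
    · exact ⟨.top, (c_plain_delay_iff hP p d _).2 (Or.inr ⟨h, rfl⟩)⟩

/-- Completion transitions into `⊥` are inherited only from `P` or the `⊥`-completion,
never the `⊤`-completion; a delay into `⊥` from a plain state comes from `P`. -/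
lemma c_plain_delay_bot (p : P.Sig) (d : Delay) :
    P.complete.tr (.plain p) (.delay d) .bot ↔ P.tr (.plain p) (.delay d) .bot := by
  refine (c_plain_delay_iff hP p d _).trans ?_
  constructor
  · rintro (h | ⟨_, h⟩)
    · exact h
    · exact absurd h (by simp)
  · exact Or.inl

lemma c_plain_delay_plain (p : P.Sig) (d : Delay) (q : P.Sig) :
    P.complete.tr (.plain p) (.delay d) (.plain q) ↔
      P.tr (.plain p) (.delay d) (.plain q) := by
  refine (c_plain_delay_iff hP p d _).trans ?_
  constructor
  · rintro (h | ⟨_, h⟩)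
    · exact h
    · exact absurd h (by simp)
  · exact Or.inl

end CompleteFacts

section SymFacts

variable {Act : Type}

/-- One-symbol successor set in `(P^⊥)^⊤`. -/
def symC (P : TIOTS Act) (α : TAct Act) (S : Set (St P.Sig)) : Set (St P.Sig) :=
  {t | ∃ s ∈ S, P.complete.tr s α t}

/-- Iterated successor sets. -/
def symRunC (P : TIOTS Act) (S : Set (St P.Sig)) (v : List (TAct Act)) : Set (St P.Sig) :=
  v.foldl (fun S α => symC P α S) S

@[simp] lemma symRunC_nil (P : TIOTS Act) (S : Set (St P.Sig)) : symRunC P S [] = S := rfl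

@[simp] lemma symRunC_cons (P : TIOTS Act) (S : Set (St P.Sig)) (α : TAct Act)
    (v : List (TAct Act)) : symRunC P S (α :: v) = symRunC P (symC P α S) v := rfl

/-- Sets of states are equivalent when they agree on `⊥`, on plain states,
and on nonemptiness. -/
def eqv {σ : Type} (S S' : Set (St σ)) : Prop :=
  (St.bot ∈ S ↔ St.bot ∈ S') ∧ (∀ p, St.plain p ∈ S ↔ St.plain p ∈ S') ∧
    (S.Nonempty ↔ S'.Nonempty)

lemma eqv_refl {σ : Type} (S : Set (St σ)) : eqv S S := ⟨Iff.rfl, fun _ => Iff.rfl, Iff.rfl⟩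

lemma eqv_symm {σ : Type} {S S' : Set (St σ)} (h : eqv S S') : eqv S' S :=
  ⟨h.1.symm, fun p => (h.2.1 p).symm, h.2.2.symm⟩

lemma eqv_trans {σ : Type} {S S' S'' : Set (St σ)} (h : eqv S S') (h' : eqv S' S'') :
    eqv S S'' :=
  ⟨h.1.trans h'.1, fun p => (h.2.1 p).trans (h'.2.1 p), h.2.2.trans h'.2.2⟩

variable {P : TIOTS Act} (hP : WF P)
include hP

lemma bot_mem_symC {α : TAct Act} {S : Set (St P.Sig)} :
    St.bot ∈ symC P α S ↔
      ((St.bot ∈ S ∧ TAct.valid P.A α) ∨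
        ∃ p, St.plain p ∈ S ∧ P.complete.tr (.plain p) α .bot) := by
  constructor
  · rintro ⟨s, hs, htr⟩
    cases s with
    | bot => exact Or.inl ⟨hs, ((c_bot_iff hP α _).1 htr).1⟩
    | top => exact absurd ((c_top_iff hP α _).1 htr).2 (by simp)
    | plain p => exact Or.inr ⟨p, hs, htr⟩
  · rintro (⟨hS, hv⟩ | ⟨p, hp, htr⟩)
    · exact ⟨.bot, hS, (c_bot_iff hP α _).2 ⟨hv, rfl⟩⟩
    · exact ⟨.plain p, hp, htr⟩

lemma plain_mem_symC {α : TAct Act} {S : Set (St P.Sig)} {q : P.Sig} :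
    St.plain q ∈ symC P α S ↔
      ∃ p, St.plain p ∈ S ∧ P.complete.tr (.plain p) α (.plain q) := by
  constructor
  · rintro ⟨s, hs, htr⟩
    cases s with
    | bot => exact absurd ((c_bot_iff hP α _).1 htr).2 (by simp)
    | top => exact absurd ((c_top_iff hP α _).1 htr).2 (by simp)
    | plain p => exact ⟨p, hs, htr⟩
  · rintro ⟨p, hp, htr⟩
    exact ⟨.plain p, hp, htr⟩

lemma nonempty_symC {α : TAct Act} (hα : TAct.valid P.A α) {S : Set (St P.Sig)} :
    (symC P α S).Nonempty ↔
      (St.bot ∈ S ∨ (∃ p, St.plain p ∈ S) ∨ (St.top ∈ S ∧ TAct.isDelay α)) := by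
  constructor
  · rintro ⟨t, s, hs, htr⟩
    cases s with
    | bot => exact Or.inl hs
    | plain p => exact Or.inr (Or.inl ⟨p, hs⟩)
    | top => exact Or.inr (Or.inr ⟨hs, ((c_top_iff hP α _).1 htr).1⟩)
  · rintro (h | ⟨p, hp⟩ | ⟨ht, hd⟩)
    · exact ⟨.bot, .bot, h, (c_bot_iff hP α _).2 ⟨hα, rfl⟩⟩
    · obtain ⟨t, htr⟩ := c_plain_enabled hP p hα
      exact ⟨t, .plain p, hp, htr⟩
    · exact ⟨.top, .top, ht, (c_top_iff hP α _).2 ⟨hd, rfl⟩⟩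

lemma symC_congr {α : TAct Act} (hα : TAct.valid P.A α) {S S' : Set (St P.Sig)}
    (h : eqv S S') : eqv (symC P α S) (symC P α S') := by
  have hbot : St.bot ∈ symC P α S ↔ St.bot ∈ symC P α S' := by
    rw [bot_mem_symC hP, bot_mem_symC hP]
    constructor
    · rintro (⟨h1, h2⟩ | ⟨p, hp, htr⟩)
      · exact Or.inl ⟨h.1.1 h1, h2⟩
      · exact Or.inr ⟨p, (h.2.1 p).1 hp, htr⟩
    · rintro (⟨h1, h2⟩ | ⟨p, hp, htr⟩)
      · exact Or.inl ⟨h.1.2 h1, h2⟩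
      · exact Or.inr ⟨p, (h.2.1 p).2 hp, htr⟩
  have hplain : ∀ q, St.plain q ∈ symC P α S ↔ St.plain q ∈ symC P α S' := by
    intro q
    rw [plain_mem_symC hP, plain_mem_symC hP]
    constructor
    · rintro ⟨p, hp, htr⟩; exact ⟨p, (h.2.1 p).1 hp, htr⟩
    · rintro ⟨p, hp, htr⟩; exact ⟨p, (h.2.1 p).2 hp, htr⟩
  refine ⟨hbot, hplain, ?_⟩
  rw [nonempty_symC hP hα, nonempty_symC hP hα]
  constructor
  · rintro (h1 | ⟨p, hp⟩ | ⟨ht, hd⟩)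
    · exact Or.inl (h.1.1 h1)
    · exact Or.inr (Or.inl ⟨p, (h.2.1 p).1 hp⟩)
    · -- `⊤ ∈ S`: if `S'` has `⊥` or a plain state we are done, otherwise `S'`
      -- is nonempty and consists of `⊤`s only.
      by_cases hb : St.bot ∈ S'
      · exact Or.inl hb
      by_cases hq : ∃ q, St.plain q ∈ S'
      · exact Or.inr (Or.inl hq)
      obtain ⟨s, hs⟩ := h.2.2.1 ⟨.top, ht⟩
      cases s with
      | bot => exact absurd hs hb
      | plain q => exact absurd ⟨q, hs⟩ hq
      | top => exact Or.inr (Or.inr ⟨hs, hd⟩)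
  · rintro (h1 | ⟨p, hp⟩ | ⟨ht, hd⟩)
    · exact Or.inl (h.1.2 h1)
    · exact Or.inr (Or.inl ⟨p, (h.2.1 p).2 hp⟩)
    · by_cases hb : St.bot ∈ S
      · exact Or.inl hb
      by_cases hq : ∃ q, St.plain q ∈ S
      · exact Or.inr (Or.inl hq)
      obtain ⟨s, hs⟩ := h.2.2.2 ⟨.top, ht⟩
      cases s with
      | bot => exact absurd hs hb
      | plain q => exact absurd ⟨q, hs⟩ hq
      | top => exact Or.inr (Or.inr ⟨hs, hd⟩)

lemma symRunC_congr {v : List (TAct Act)} (hv : ∀ γ ∈ v, TAct.valid P.A γ)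
    {S S' : Set (St P.Sig)} (h : eqv S S') : eqv (symRunC P S v) (symRunC P S' v) := by
  induction v generalizing S S' with
  | nil => exact h
  | cons α v ih =>
    rw [symRunC_cons, symRunC_cons]
    exact ih (fun γ hγ => hv γ (List.mem_cons_of_mem _ hγ))
      (symC_congr hP (hv α (List.mem_cons_self)) h)

lemma nonempty_symC_delay {d : Delay} {S : Set (St P.Sig)} :
    (symC P (.delay d) S).Nonempty ↔ S.Nonempty := by
  rw [nonempty_symC (α := TAct.delay d) hP trivial]
  constructor
  · rintro (h | ⟨p, hp⟩ | ⟨ht, _⟩)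
    · exact ⟨_, h⟩
    · exact ⟨_, hp⟩
    · exact ⟨_, ht⟩
  · rintro ⟨s, hs⟩
    cases s with
    | bot => exact Or.inl hs
    | plain p => exact Or.inr (Or.inl ⟨p, hs⟩)
    | top => exact Or.inr (Or.inr ⟨hs, trivial⟩)

/-- Splitting a delay into two pieces yields an equivalent successor set. -/
lemma symC_split (d e : Delay) (S : Set (St P.Sig)) :
    eqv (symC P (.delay (dsum d e)) S) (symC P (.delay e) (symC P (.delay d) S)) := by
  have hadd := hP.2.2.2.2
  have hbotP : ∀ α (s' : St P.Sig), P.tr .bot α s' ↔ (TAct.valid P.A α ∧ s' = .bot) :=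
    hP.2.2.2.1
  have htopP : ∀ α (s' : St P.Sig), P.tr .top α s' ↔ (TAct.isDelay α ∧ s' = .top) :=
    hP.2.2.1
  refine ⟨?_, ?_, ?_⟩
  · rw [bot_mem_symC hP, bot_mem_symC hP]
    constructor
    · rintro (⟨h1, _⟩ | ⟨p, hp, htr⟩)
      · exact Or.inl ⟨(bot_mem_symC hP).2 (Or.inl ⟨h1, trivial⟩), trivial⟩
      · rw [c_plain_delay_bot hP] at htr
        obtain ⟨m, hm1, hm2⟩ := (hadd p d e .bot).1 htr
        cases m with
        | bot =>
          exact Or.inl ⟨(bot_mem_symC hP).2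
            (Or.inr ⟨p, hp, (c_plain_delay_bot hP p d).2 hm1⟩), trivial⟩
        | top => exact absurd ((htopP _ _).1 hm2).2 (by simp)
        | plain q =>
          refine Or.inr ⟨q, (plain_mem_symC hP).2
            ⟨p, hp, (c_plain_delay_plain hP p d q).2 hm1⟩, (c_plain_delay_bot hP q e).2 hm2⟩
    · rintro (⟨h1, _⟩ | ⟨q, hq, htr⟩)
      · rcases (bot_mem_symC hP).1 h1 with ⟨h1, _⟩ | ⟨p, hp, htr⟩
        · exact Or.inl ⟨h1, trivial⟩
        · rw [c_plain_delay_bot hP] at htr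
          refine Or.inr ⟨p, hp, (c_plain_delay_bot hP p _).2 ?_⟩
          exact (hadd p d e .bot).2 ⟨.bot, htr, (hbotP _ _).2 ⟨trivial, rfl⟩⟩
      · obtain ⟨p, hp, htr'⟩ := (plain_mem_symC hP).1 hq
        rw [c_plain_delay_plain hP] at htr'
        rw [c_plain_delay_bot hP] at htr
        refine Or.inr ⟨p, hp, (c_plain_delay_bot hP p _).2 ?_⟩
        exact (hadd p d e .bot).2 ⟨.plain q, htr', htr⟩
  · intro r
    rw [plain_mem_symC hP, plain_mem_symC hP]
    constructor
    · rintro ⟨p, hp, htr⟩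
      rw [c_plain_delay_plain hP] at htr
      obtain ⟨m, hm1, hm2⟩ := (hadd p d e (.plain r)).1 htr
      cases m with
      | bot => exact absurd ((hbotP _ _).1 hm2).2 (by simp)
      | top => exact absurd ((htopP _ _).1 hm2).2 (by simp)
      | plain q =>
        exact ⟨q, (plain_mem_symC hP).2 ⟨p, hp, (c_plain_delay_plain hP p d q).2 hm1⟩,
          (c_plain_delay_plain hP q e r).2 hm2⟩
    · rintro ⟨q, hq, htr⟩
      obtain ⟨p, hp, htr'⟩ := (plain_mem_symC hP).1 hq
      rw [c_plain_delay_plain hP] at htr htr'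
      refine ⟨p, hp, (c_plain_delay_plain hP p _ r).2 ?_⟩
      exact (hadd p d e (.plain r)).2 ⟨.plain q, htr', htr⟩
  · rw [nonempty_symC_delay hP, nonempty_symC_delay hP, nonempty_symC_delay hP]

/-- Normalisation of a step list does not change the successor set, up to `eqv`. -/
lemma symRunC_normW {v : List (TAct Act)} (hv : ∀ γ ∈ v, TAct.valid P.A γ)
    (S : Set (St P.Sig)) : eqv (symRunC P S v) (symRunC P S (normW v)) := by
  induction v generalizing S with
  | nil => exact eqv_refl _
  | cons α v ih =>
    have hv' : ∀ γ ∈ v, TAct.valid P.A γ := fun γ hγ => hv γ (List.mem_cons_of_mem _ hγ)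
    have hnv : ∀ γ ∈ normW v, TAct.valid P.A γ := val_normW hv'
    have hnorm : normW (α :: v) = tcat [α] (normW v) := rfl
    by_cases hco : TAct.isDelay α ∧ ∃ e w', normW v = TAct.delay e :: w'
    · obtain ⟨hα, e, rest, hrest⟩ := hco
      obtain ⟨d, rfl⟩ : ∃ d, α = TAct.delay d := by
        cases α with
        | act a => exact absurd hα (by simp [TAct.isDelay])
        | delay d => exact ⟨d, rfl⟩
      rw [hnorm, hrest, tcat_delay_delay, symRunC_cons, symRunC_cons]
      have step1 : eqv (symRunC P (symC P (.delay d) S) v)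
          (symRunC P (symC P (.delay d) S) (normW v)) := ih hv' _
      rw [hrest, symRunC_cons] at step1
      refine eqv_trans step1 ?_
      have hrest_val : ∀ γ ∈ rest, TAct.valid P.A γ := by
        intro γ hγ
        exact hnv γ (hrest ▸ List.mem_cons_of_mem _ hγ)
      exact symRunC_congr hP hrest_val (eqv_symm (symC_split hP d e S))
    · rw [hnorm, tcat_single_not_head_delay hco, symRunC_cons, symRunC_cons]
      exact ih hv' _

end SymFacts

section DetFacts

variable {Act : Type}

lemma detSt_of_bot_mem {σ : Type} {X : Set (St σ)} (h : St.bot ∈ X) : detSt X = .bot := by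
  unfold detSt; rw [if_pos h]

lemma detSt_bot_iff {σ : Type} {X : Set (St σ)} : detSt X = .bot ↔ St.bot ∈ X := by
  constructor
  · intro h
    unfold detSt at h
    split_ifs at h with h1 h2
    exact h1
  · exact detSt_of_bot_mem

lemma detSt_top_iff {σ : Type} {X : Set (St σ)} :
    detSt X = .top ↔ (St.bot ∉ X ∧ X = {St.top}) := by
  constructor
  · intro h
    unfold detSt at h
    split_ifs at h with h1 h2
    exact ⟨h1, h2⟩
  · rintro ⟨h1, h2⟩
    unfold detSt; rw [if_neg h1, if_pos h2]

lemma detSt_plain_eq {σ : Type} {X : Set (St σ)} (h1 : St.bot ∉ X) (h2 : X ≠ {St.top}) :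
    detSt X = .plain {p | St.plain p ∈ X} := by
  unfold detSt; rw [if_neg h1, if_neg h2]

lemma singleton_top_iff {σ : Type} {X : Set (St σ)} :
    X = {St.top} ↔ (X.Nonempty ∧ St.bot ∉ X ∧ ∀ p, St.plain p ∉ X) := by
  constructor
  · rintro rfl
    refine ⟨⟨St.top, rfl⟩, ?_, fun p => ?_⟩
    · intro hc
      simp only [Set.mem_singleton_iff] at hc
      exact absurd hc (by simp)
    · intro hc
      simp only [Set.mem_singleton_iff] at hc
      exact absurd hc (by simp)
  · rintro ⟨h1, h2, h3⟩
    ext s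
    cases s with
    | bot => simpa using h2
    | plain p => simpa using h3 p
    | top =>
      refine ⟨fun _ => rfl, fun _ => ?_⟩
      obtain ⟨s, hs⟩ := h1
      cases s with
      | bot => exact absurd hs h2
      | plain p => exact absurd hs (h3 p)
      | top => exact hs

lemma exists_plain_of_nonempty {σ : Type} {X : Set (St σ)} (h1 : X.Nonempty)
    (h2 : St.bot ∉ X) (h3 : X ≠ {St.top}) : ∃ p, St.plain p ∈ X := by
  by_contra hc
  push_neg at hc
  exact h3 (singleton_top_iff.2 ⟨h1, h2, hc⟩)

lemma detSt_eqv {σ : Type} {X Y : Set (St σ)} (h : eqv X Y) (hne : X.Nonempty) :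
    detSt X = detSt Y := by
  by_cases hb : St.bot ∈ X
  · rw [detSt_of_bot_mem hb, detSt_of_bot_mem (h.1.1 hb)]
  · have hb' : St.bot ∉ Y := fun hy => hb (h.1.2 hy)
    by_cases ht : X = {St.top}
    · have hY : Y = {St.top} := by
        rw [singleton_top_iff] at ht ⊢
        exact ⟨h.2.2.1 ht.1, hb', fun p hp => ht.2.2 p ((h.2.1 p).2 hp)⟩
      rw [detSt_top_iff.2 ⟨hb, ht⟩, detSt_top_iff.2 ⟨hb', hY⟩]
    · have hY : Y ≠ {St.top} := by
        intro hy
        rw [singleton_top_iff] at hy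
        exact ht (singleton_top_iff.2 ⟨hne, hb, fun p hp => hy.2.2 p ((h.2.1 p).1 hp)⟩)
      rw [detSt_plain_eq hb ht, detSt_plain_eq hb' hY]
      congr 1
      ext p
      exact h.2.1 p

/-- The embedding of a set of plain states into `St`. -/
def plainImg {σ : Type} (X : Set σ) : Set (St σ) := St.plain '' X

lemma post_eq_symC (P : TIOTS Act) (X : Set P.Sig) (α : TAct Act) :
    post P.complete X α = symC P α (plainImg X) := by
  ext t
  constructor
  · rintro ⟨p, hp, htr⟩
    exact ⟨.plain p, ⟨p, hp, rfl⟩, htr⟩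
  · rintro ⟨s, ⟨p, hp, rfl⟩, htr⟩
    exact ⟨p, hp, htr⟩

lemma eqv_plainImg {σ : Type} {S : Set (St σ)} (h1 : St.bot ∉ S) (h2 : S ≠ {St.top}) :
    eqv S (plainImg {p | St.plain p ∈ S}) := by
  refine ⟨?_, ?_, ?_⟩
  · simp only [plainImg]
    constructor
    · intro h; exact absurd h h1
    · rintro ⟨p, _, hp⟩; exact absurd hp (by simp)
  · intro p
    simp only [plainImg, Set.mem_image]
    constructor
    · intro h; exact ⟨p, h, rfl⟩
    · rintro ⟨q, hq, hqe⟩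
      obtain rfl : q = p := by injection hqe
      exact hq
  · constructor
    · intro hne
      obtain ⟨p, hp⟩ := exists_plain_of_nonempty hne h1 h2
      exact ⟨.plain p, p, hp, rfl⟩
    · rintro ⟨s, p, hp, rfl⟩
      exact ⟨.plain p, hp⟩

/-- The deterministic one-step successor function of `P^D`. -/
noncomputable def dpostD (P : TIOTS Act) (t : St (Set P.Sig)) (α : TAct Act) :
    St (Set P.Sig) :=
  match t with
  | .plain X => detSt (post P.complete X α)
  | .bot => .bot
  | .top => .top

noncomputable def dRunD (P : TIOTS Act) (t : St (Set P.Sig)) (v : TWord Act) :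
    St (Set P.Sig) :=
  v.foldl (dpostD P) t

/-- The run of `P^D` on a word is defined. -/
def dOkD (P : TIOTS Act) : St (Set P.Sig) → TWord Act → Prop
  | _, [] => True
  | t, α :: w => TAct.valid P.A α ∧ (t = .top → TAct.isDelay α) ∧ dOkD P (dpostD P t α) w

@[simp] lemma dRunD_nil (P : TIOTS Act) (t : St (Set P.Sig)) : dRunD P t [] = t := rfl

@[simp] lemma dRunD_cons (P : TIOTS Act) (t : St (Set P.Sig)) (α : TAct Act)
    (w : TWord Act) : dRunD P t (α :: w) = dRunD P (dpostD P t α) w := rfl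

@[simp] lemma dOkD_nil (P : TIOTS Act) (t : St (Set P.Sig)) : dOkD P t [] := trivial

lemma dOkD_cons (P : TIOTS Act) (t : St (Set P.Sig)) (α : TAct Act) (w : TWord Act) :
    dOkD P t (α :: w) ↔
      (TAct.valid P.A α ∧ (t = .top → TAct.isDelay α) ∧ dOkD P (dpostD P t α) w) :=
  Iff.rfl

variable {P : TIOTS Act} (hP : WF P)
include hP

/-- Delay-splitting for the deterministic successor function. -/
lemma dpost_split (t : St (Set P.Sig)) (d e : Delay) :
    dpostD P (dpostD P t (.delay d)) (.delay e) = dpostD P t (.delay (dsum d e)) := by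
  cases t with
  | bot => rfl
  | top => rfl
  | plain X =>
    show dpostD P (detSt (post P.complete X (.delay d))) (.delay e) =
      detSt (post P.complete X (.delay (dsum d e)))
    rw [post_eq_symC, post_eq_symC]
    set S1 := symC P (.delay d) (plainImg X) with hS1
    have hsplit := symC_split hP d e (plainImg X)
    by_cases hb : St.bot ∈ S1
    · rw [detSt_of_bot_mem hb]
      show St.bot = _
      have : St.bot ∈ symC P (.delay e) S1 :=
        (bot_mem_symC hP).2 (Or.inl ⟨hb, trivial⟩)
      exact (detSt_of_bot_mem (hsplit.1.2 this)).symm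
    · by_cases ht : S1 = {St.top}
      · rw [detSt_top_iff.2 ⟨hb, ht⟩]
        show St.top = _
        have htop : symC P (.delay e) S1 = {St.top} := by
          ext u
          constructor
          · rintro ⟨s, hs, htr⟩
            rw [ht] at hs
            obtain rfl : s = St.top := hs
            exact ((c_top_iff hP _ _).1 htr).2
          · rintro rfl
            exact ⟨.top, ht ▸ rfl, (c_top_iff hP _ _).2 ⟨trivial, rfl⟩⟩
        have heqv := eqv_trans hsplit (by rw [htop]; exact eqv_refl _)
        refine (detSt_top_iff.2 ⟨?_, ?_⟩).symm
        · intro hbm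
          exact absurd (heqv.1.1 hbm) (by simp)
        · rw [singleton_top_iff]
          refine ⟨heqv.2.2.2 ⟨.top, rfl⟩, ?_, ?_⟩
          · intro hbm; exact absurd (heqv.1.1 hbm) (by simp)
          · intro p hp
            exact absurd ((heqv.2.1 p).1 hp) (by simp)
      · rw [detSt_plain_eq hb ht]
        show detSt (post P.complete _ (.delay e)) = _
        rw [post_eq_symC]
        have heqv1 : eqv (symC P (.delay e) S1)
            (symC P (.delay e) (plainImg {p | St.plain p ∈ S1})) :=
          symC_congr (α := TAct.delay e) hP trivial (eqv_plainImg hb ht)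
        have heqv : eqv (symC P (.delay e) (plainImg {p | St.plain p ∈ S1}))
            (symC P (.delay (dsum d e)) (plainImg X)) :=
          eqv_symm (eqv_trans hsplit heqv1)
        by_cases hne : (symC P (.delay e) (plainImg {p | St.plain p ∈ S1})).Nonempty
        · exact detSt_eqv heqv hne
        · rw [Set.not_nonempty_iff_eq_empty] at hne
          have hne2 : symC P (.delay (dsum d e)) (plainImg X) = ∅ := by
            rw [← Set.not_nonempty_iff_eq_empty]
            intro hc
            obtain ⟨u, hu⟩ := heqv.2.2.2 hc
            rw [hne] at hu
            exact absurd hu (Set.notMem_empty u)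
          rw [hne, hne2]

lemma dRunD_tcat (s : St (Set P.Sig)) (α : TAct Act) (w : TWord Act) :
    dRunD P s (tcat [α] w) = dRunD P (dpostD P s α) w := by
  cases α with
  | act a => rw [tcat_act_cons]; rfl
  | delay d =>
    cases w with
    | nil => rw [tcat_delay_nil]; rfl
    | cons β w' =>
      cases β with
      | act a => rw [tcat_delay_act]; rfl
      | delay e =>
        rw [tcat_delay_delay]
        show dRunD P (dpostD P s (.delay (dsum d e))) w' =
          dRunD P (dpostD P (dpostD P s (.delay d)) (.delay e)) w'
        rw [dpost_split hP]

lemma dOkD_tcat (s : St (Set P.Sig)) (α : TAct Act) (w : TWord Act) :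
    dOkD P s (tcat [α] w) ↔
      (TAct.valid P.A α ∧ (s = .top → TAct.isDelay α) ∧ dOkD P (dpostD P s α) w) := by
  cases α with
  | act a => rw [tcat_act_cons]; exact Iff.rfl
  | delay d =>
    cases w with
    | nil =>
      rw [tcat_delay_nil]
      simp [dOkD_cons, TAct.valid, TAct.isDelay]
    | cons β w' =>
      cases β with
      | act a => rw [tcat_delay_act]; exact Iff.rfl
      | delay e =>
        rw [tcat_delay_delay]
        show (TAct.valid P.A (TAct.delay (dsum d e)) ∧ _ ∧
            dOkD P (dpostD P s (.delay (dsum d e))) w') ↔ _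
        rw [← dpost_split hP]
        show _ ↔ (TAct.valid P.A (TAct.delay d) ∧ _ ∧
            (TAct.valid P.A (TAct.delay e) ∧ _ ∧
              dOkD P (dpostD P (dpostD P s (.delay d)) (.delay e)) w'))
        simp [TAct.valid, TAct.isDelay]

omit hP in
lemma det_tr_iff (s : St (Set P.Sig)) (α : TAct Act) (t : St (Set P.Sig)) :
    P.det.tr s α t ↔
      (TAct.valid P.A α ∧ (s = .top → TAct.isDelay α) ∧ t = dpostD P s α) := by
  show ((∃ X, s = St.plain X ∧ _ ∧ t = _) ∨ _ ∨ _) ↔ _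
  constructor
  · rintro (⟨X, rfl, hv, rfl⟩ | ⟨rfl, hv, rfl⟩ | ⟨rfl, hd, rfl⟩)
    · exact ⟨hv, by simp, rfl⟩
    · exact ⟨hv, by simp, rfl⟩
    · refine ⟨?_, fun _ => hd, rfl⟩
      cases α with
      | act a => exact absurd hd (by simp [TAct.isDelay])
      | delay d => trivial
  · rintro ⟨hv, htop, rfl⟩
    cases s with
    | plain X => exact Or.inl ⟨X, rfl, hv, rfl⟩
    | bot => exact Or.inr (Or.inl ⟨rfl, hv, rfl⟩)
    | top => exact Or.inr (Or.inr ⟨rfl, htop rfl, rfl⟩)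

lemma det_exec_run {s : St (Set P.Sig)} {w : TWord Act} {t : St (Set P.Sig)}
    (h : Exec P.det s w t) : dOkD P s w ∧ t = dRunD P s w := by
  have key : ∀ {s : St P.det.Sig} {w : TWord Act} {t : St P.det.Sig},
      Exec P.det s w t → dOkD P s w ∧ t = dRunD P s w := by
    intro s w t h
    induction h with
    | nil => exact ⟨trivial, rfl⟩
    | cons htr hex ih =>
      rename_i s α s' w' t
      obtain ⟨hv, htop, rfl⟩ := (det_tr_iff _ _ _).1 htr
      refine ⟨(dOkD_tcat hP _ _ _).2 ⟨hv, htop, ih.1⟩, ?_⟩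
      refine Eq.trans ?_ (dRunD_tcat hP s α w').symm
      exact ih.2
  exact key h

lemma det_run_exec {w : TWord Act} (hw : IsTWord w) {s : St (Set P.Sig)}
    (hok : dOkD P s w) : Exec P.det s w (dRunD P s w) := by
  induction w generalizing s with
  | nil => exact Exec.nil (P := P.det) s
  | cons α w' ih =>
    obtain ⟨hv, htop, hrest⟩ := (dOkD_cons P s α w').1 hok
    have hstep : P.det.tr s α (dpostD P s α) := (det_tr_iff _ _ _).2 ⟨hv, htop, rfl⟩
    have hex := ih hw.tail hrest
    have := Exec.cons hstep hex
    rwa [tcat_single_not_head_delay ?_] at this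
    rintro ⟨hα, e, w'', rfl⟩
    exact (List.isChain_cons.1 hw).1 (TAct.delay e) rfl ⟨hα, trivial⟩

omit hP in
lemma det_tr_valid (s : St (Set P.Sig)) (α : TAct Act) (t : St (Set P.Sig))
    (h : P.det.tr s α t) : TAct.valid P.A α := ((det_tr_iff _ _ _).1 h).1

omit hP in
lemma symRunC_empty (v : List (TAct Act)) : symRunC P ∅ v = ∅ := by
  induction v with
  | nil => rfl
  | cons α v ih =>
    rw [symRunC_cons]
    have : symC P α ∅ = ∅ := by
      ext t; constructor
      · rintro ⟨s, hs, _⟩; exact hs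
      · rintro h; exact absurd h (Set.notMem_empty t)
    rw [this, ih]

/-- Correctness of the subset construction, one word at a time. -/
lemma stepChar : ∀ (w : TWord Act), (∀ γ ∈ w, TAct.valid P.A γ) →
    ∀ (t : St (Set P.Sig)) (S : Set (St P.Sig)), S.Nonempty → t = detSt S →
      (((symRunC P S w).Nonempty ↔ dOkD P t w) ∧
        (dOkD P t w → dRunD P t w = detSt (symRunC P S w))) := by
  intro w
  induction w with
  | nil =>
    intro _ t S hS ht
    exact ⟨⟨fun _ => trivial, fun _ => hS⟩, fun _ => ht⟩
  | cons α w' ih =>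
    intro hval t S hS ht
    have hvα : TAct.valid P.A α := hval α (List.mem_cons_self)
    have hval' : ∀ γ ∈ w', TAct.valid P.A γ := fun γ hγ => hval γ (List.mem_cons_of_mem _ hγ)
    by_cases hcase : t = .top ∧ ¬ TAct.isDelay α
    · -- the run is stuck: `S = {⊤}` and `α` is an action
      obtain ⟨ht', hα⟩ := hcase
      have hStop : St.bot ∉ S ∧ S = {St.top} := detSt_top_iff.1 (ht ▸ ht')
      have hempty : symC P α S = ∅ := by
        ext u
        constructor
        · rintro ⟨s, hs, htr⟩
          rw [hStop.2] at hs
          obtain rfl : s = St.top := hs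
          exact absurd ((c_top_iff hP _ _).1 htr).1 hα
        · rintro h; exact absurd h (Set.notMem_empty u)
      rw [symRunC_cons, hempty, symRunC_empty]
      constructor
      · constructor
        · rintro ⟨u, hu⟩; exact absurd hu (Set.notMem_empty u)
        · intro hok
          exact absurd ((dOkD_cons P t α w').1 hok |>.2.1 ht') hα
      · intro hok
        exact absurd ((dOkD_cons P t α w').1 hok |>.2.1 ht') hα
    · -- the step goes through
      have htopd : t = .top → TAct.isDelay α := by
        intro h
        by_contra hc
        exact hcase ⟨h, hc⟩
      have hS' : (symC P α S).Nonempty := by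
        rw [nonempty_symC hP hvα]
        by_cases hb : St.bot ∈ S
        · exact Or.inl hb
        by_cases hq : ∃ p, St.plain p ∈ S
        · exact Or.inr (Or.inl hq)
        have hStop : S = {St.top} := by
          rw [singleton_top_iff]
          push_neg at hq
          exact ⟨hS, hb, hq⟩
        have : t = .top := by rw [ht, detSt_top_iff.2 ⟨hb, hStop⟩]
        exact Or.inr (Or.inr ⟨hStop ▸ rfl, htopd this⟩)
      have htt' : dpostD P t α = detSt (symC P α S) := by
        by_cases hb : St.bot ∈ S
        · have : t = .bot := by rw [ht, detSt_of_bot_mem hb]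
          rw [this]
          show St.bot = _
          exact (detSt_of_bot_mem ((bot_mem_symC hP).2 (Or.inl ⟨hb, hvα⟩))).symm
        · by_cases htp : S = {St.top}
          · have htt : t = .top := by rw [ht, detSt_top_iff.2 ⟨hb, htp⟩]
            have hα : TAct.isDelay α := htopd htt
            rw [htt]
            show St.top = _
            have : symC P α S = {St.top} := by
              ext u
              constructor
              · rintro ⟨s, hs, htr⟩
                rw [htp] at hs
                obtain rfl : s = St.top := hs
                exact ((c_top_iff hP _ _).1 htr).2
              · rintro rfl
                exact ⟨.top, htp ▸ rfl, (c_top_iff hP _ _).2 ⟨hα, rfl⟩⟩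
            rw [this, detSt_top_iff.2 ⟨by simp, rfl⟩]
          · have htt : t = .plain {p | St.plain p ∈ S} := by
              rw [ht, detSt_plain_eq hb htp]
            rw [htt]
            show detSt (post P.complete _ α) = _
            rw [post_eq_symC]
            have heqv : eqv (symC P α (plainImg {p | St.plain p ∈ S})) (symC P α S) :=
              eqv_symm (symC_congr hP hvα (eqv_plainImg hb htp))
            exact detSt_eqv heqv (heqv.2.2.2 hS')
      obtain ⟨ih1, ih2⟩ := ih hval' (dpostD P t α) (symC P α S) hS' htt'
      rw [symRunC_cons]
      constructor
      · rw [ih1, dOkD_cons]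
        constructor
        · intro h; exact ⟨hvα, htopd, h⟩
        · rintro ⟨_, _, h⟩; exact h
      · intro hok
        rw [dRunD_cons]
        exact ih2 ((dOkD_cons P t α w').1 hok).2.2

end DetFacts

section MirrorMain

variable {Act : Type}

@[simp] lemma swap_swap {σ : Type} (s : St σ) : St.swap (St.swap s) = s := by
  cases s <;> rfl

lemma detSt_plain_iff {σ : Type} {T : Set (St σ)} :
    (∃ X, detSt T = .plain X) ↔ (St.bot ∉ T ∧ T ≠ {St.top}) := by
  constructor
  · rintro ⟨X, hX⟩
    by_cases hb : St.bot ∈ T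
    · rw [detSt_of_bot_mem hb] at hX; exact absurd hX (by simp)
    · by_cases ht : T = {St.top}
      · rw [detSt_top_iff.2 ⟨hb, ht⟩] at hX; exact absurd hX (by simp)
      · exact ⟨hb, ht⟩
  · rintro ⟨hb, ht⟩
    exact ⟨_, detSt_plain_eq hb ht⟩

variable {P : TIOTS Act}

lemma mirror_plain_enabled {X : Set P.Sig} {α : TAct Act} (hv : TAct.valid P.A α) :
    enabled P.mirror (.plain X) α := by
  refine ⟨St.swap (dpostD P (.plain X) α), ?_⟩
  show P.det.tr (St.plain X) α (St.swap (St.swap (dpostD P (.plain X) α)))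
  refine (congrArg (P.det.tr (St.plain X) α) (swap_swap (dpostD P (.plain X) α))).mpr ?_
  exact (det_tr_iff _ _ _).2 ⟨hv, fun h => (by cases h), rfl⟩

lemma mirror_complete_tr (s : St P.mirror.Sig) (α : TAct Act) (t : St P.mirror.Sig) :
    P.mirror.complete.tr s α t ↔ P.mirror.tr s α t := by
  rw [c_tr_iff]
  constructor
  · rintro (h | ⟨⟨X, rfl⟩, ⟨a, ha, rfl⟩, hne, rfl⟩ | ⟨⟨X, rfl⟩, hv, hne, rfl⟩)
    · exact h
    · exact absurd (mirror_plain_enabled (P := P) (X := X) (α := TAct.act a) (Or.inr ha)) hne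
    · refine absurd ?_ hne
      have hv' : TAct.valid P.A α := by
        cases α with
        | act a => exact Or.inl hv
        | delay d => trivial
      obtain ⟨t', ht'⟩ := mirror_plain_enabled (X := X) hv'
      exact ⟨t', Or.inl ht'⟩
  · exact Or.inl

lemma exec_map {Q R : TIOTS Act} (e : St Q.Sig → St R.Sig)
    (hcompat : ∀ s α t, Q.tr s α t → R.tr (e s) α (e t)) {s : St Q.Sig} {w : TWord Act}
    {t : St Q.Sig} (h : Exec Q s w t) : Exec R (e s) w (e t) := by
  induction h with
  | nil => exact Exec.nil _
  | cons htr _ ih => exact Exec.cons (hcompat _ _ _ htr) ih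

lemma reach_mc_iff (w : TWord Act) (t : St P.mirror.Sig) :
    Reach P.mirror.complete w t ↔ Reach P.det w (St.swap t) := by
  constructor
  · intro h
    have h1 : Exec P.mirror P.mirror.complete.init w t :=
      exec_map (Q := P.mirror.complete) (R := P.mirror) (fun s => s)
        (fun s α u htr => (mirror_complete_tr s α u).1 htr) h
    have h2 : Exec P.det (St.swap P.mirror.init) w (St.swap t) :=
      exec_map (Q := P.mirror) (R := P.det) St.swap (fun s α u htr => htr) h1
    have h3 : St.swap P.mirror.init = P.det.init := swap_swap P.det.init
    exact (congrArg (fun s => Exec P.det s w (St.swap t)) h3).mp h2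
  · intro h
    have h1 : Exec P.mirror (St.swap P.det.init) w (St.swap (St.swap t)) :=
      exec_map (Q := P.det) (R := P.mirror) St.swap
        (fun s α u htr => by
          show P.det.tr (St.swap (St.swap s)) α (St.swap (St.swap u))
          rwa [swap_swap, swap_swap]) h
    rw [swap_swap] at h1
    have h2 : Exec P.mirror.complete (St.swap P.det.init) w t :=
      exec_map (Q := P.mirror) (R := P.mirror.complete) (fun s => s)
        (fun s α u htr => (mirror_complete_tr s α u).2 htr) h1
    exact h2

variable (hP : WF P)
include hP

omit hP in
lemma sexec_nil_eq {Q : TIOTS Act} {s u : St Q.Sig} (h : SExec Q s [] u) : s = u := by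
  cases h; rfl

omit hP in
lemma sexec_cons_iff {Q : TIOTS Act} {s u : St Q.Sig} {α : TAct Act} {v : List (TAct Act)} :
    SExec Q s (α :: v) u ↔ ∃ m, Q.tr s α m ∧ SExec Q m v u := by
  constructor
  · intro h
    cases h with
    | cons htr hex => exact ⟨_, htr, hex⟩
  · rintro ⟨m, htr, hex⟩
    exact SExec.cons htr hex

omit hP in
lemma sexec_mem_symRunC {v : List (TAct Act)} {S : Set (St P.Sig)} {u : St P.Sig} :
    u ∈ symRunC P S v ↔ ∃ s ∈ S, SExec P.complete s v u := by
  induction v generalizing S with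
  | nil =>
    constructor
    · intro h; exact ⟨u, h, SExec.nil (Q := P.complete) u⟩
    · rintro ⟨s, hs, hex⟩
      rw [← sexec_nil_eq hex]
      exact hs
  | cons α v ih =>
    rw [symRunC_cons, ih]
    constructor
    · rintro ⟨s', ⟨s, hs, htr⟩, hex⟩
      exact ⟨s, hs, sexec_cons_iff.2 ⟨s', htr, hex⟩⟩
    · rintro ⟨s, hs, hex⟩
      obtain ⟨m, htr, hex'⟩ := sexec_cons_iff.1 hex
      exact ⟨m, ⟨s, hs, htr⟩, hex'⟩

lemma reach_c_char {w : TWord Act} (hw : IsTWord w) {u : St P.Sig} :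
    Reach P.complete w u ↔
      ∃ v, normW v = w ∧ u ∈ symRunC P ({P.complete.init} : Set (St P.Sig)) v := by
  refine (exec_iff_sexec (Q := P.complete)).trans ?_
  constructor
  · rintro ⟨v, hv, hex⟩
    exact ⟨v, hv, sexec_mem_symRunC.2 ⟨_, rfl, hex⟩⟩
  · rintro ⟨v, hv, hmem⟩
    obtain ⟨s, hs, hex⟩ := sexec_mem_symRunC.1 hmem
    obtain rfl : s = P.complete.init := hs
    exact ⟨v, hv, hex⟩

/-- Transfer of reachability of `(P^⊥)^⊤` to the canonical successor sets. -/
lemma reach_c_bot {w : TWord Act} (hw : IsTWord w) (hv : ∀ γ ∈ w, TAct.valid P.A γ) :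
    Reach P.complete w .bot ↔
      St.bot ∈ symRunC P ({P.complete.init} : Set (St P.Sig)) w := by
  refine (reach_c_char hP hw).trans ?_
  constructor
  · rintro ⟨v, rfl, hmem⟩
    obtain ⟨s, hs, hex⟩ := sexec_mem_symRunC.1 hmem
    have hval : ∀ γ ∈ v, TAct.valid P.A γ :=
      sexec_valid (fun s α t h => c_valid hP h) hex
    exact (symRunC_normW hP hval _).1.1 hmem
  · intro hmem
    exact ⟨w, normW_eq_self hw, hmem⟩

lemma reach_c_plain {w : TWord Act} (hw : IsTWord w) (hv : ∀ γ ∈ w, TAct.valid P.A γ)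
    {p : P.Sig} :
    Reach P.complete w (.plain p) ↔
      St.plain p ∈ symRunC P ({P.complete.init} : Set (St P.Sig)) w := by
  refine (reach_c_char hP hw).trans ?_
  constructor
  · rintro ⟨v, rfl, hmem⟩
    obtain ⟨s, hs, hex⟩ := sexec_mem_symRunC.1 hmem
    have hval : ∀ γ ∈ v, TAct.valid P.A γ :=
      sexec_valid (fun s α t h => c_valid hP h) hex
    exact ((symRunC_normW hP hval _).2.1 p).1 hmem
  · intro hmem
    exact ⟨w, normW_eq_self hw, hmem⟩

lemma reach_c_ne {w : TWord Act} (hw : IsTWord w) (hv : ∀ γ ∈ w, TAct.valid P.A γ) :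
    (∃ u, Reach P.complete w u) ↔
      (symRunC P ({P.complete.init} : Set (St P.Sig)) w).Nonempty := by
  constructor
  · rintro ⟨u, hu⟩
    obtain ⟨v, rfl, hmem⟩ := (reach_c_char hP hw).1 hu
    obtain ⟨s, hs, hex⟩ := sexec_mem_symRunC.1 hmem
    have hval : ∀ γ ∈ v, TAct.valid P.A γ :=
      sexec_valid (fun s α t h => c_valid hP h) hex
    exact (symRunC_normW hP hval _).2.2.1 ⟨u, hmem⟩
  · rintro ⟨u, hmem⟩
    exact ⟨u, (reach_c_char hP hw).2 ⟨w, normW_eq_self hw, hmem⟩⟩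

lemma dOkD_val : ∀ {w : TWord Act} {t : St (Set P.Sig)},
    dOkD P t w → ∀ γ ∈ w, TAct.valid P.A γ := by
  intro w
  induction w with
  | nil => intro t _ γ hγ; simp at hγ
  | cons α w ih =>
    intro t hok γ hγ
    obtain ⟨hv, _, hrest⟩ := (dOkD_cons P t α w).1 hok
    rcases List.mem_cons.1 hγ with h | h
    · exact h ▸ hv
    · exact ih hrest γ h

lemma reach_det_char {w : TWord Act} {t : St (Set P.Sig)} :
    Reach P.det w t ↔ (IsTWord w ∧ dOkD P P.det.init w ∧ t = dRunD P P.det.init w) := by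
  constructor
  · intro h
    obtain ⟨hok, ht⟩ := det_exec_run hP h
    exact ⟨exec_isTWord h, hok, ht⟩
  · rintro ⟨hw, hok, rfl⟩
    exact det_run_exec hP hw hok

/-- Master characterisation of the trace sets of the mirror. -/
lemma mirror_master (w : TWord Act) :
    (w ∈ TEset P.mirror ↔ w ∈ TTset P \ TRset P) ∧
    (w ∈ TPset P.mirror ↔ w ∈ TPset P \ TEset P) ∧
    (w ∈ TMset P.mirror ↔ w ∈ TEset P) := by
  classical
  set S0 : Set (St P.Sig) := {P.complete.init} with hS0
  set T : Set (St P.Sig) := symRunC P S0 w with hT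
  by_cases hgood : IsTWord w ∧ ∀ γ ∈ w, TAct.valid P.A γ
  · obtain ⟨hw, hv⟩ := hgood
    -- characterisations on the `P` side
    have hTE : w ∈ TEset P ↔ St.bot ∈ T := reach_c_bot hP hw hv
    have hTP : w ∈ TPset P ↔ ∃ p, St.plain p ∈ T := by
      constructor
      · rintro ⟨p, hp⟩; exact ⟨p, (reach_c_plain hP hw hv).1 hp⟩
      · rintro ⟨p, hp⟩; exact ⟨p, (reach_c_plain hP hw hv).2 hp⟩
    have hTT : w ∈ TTset P ↔ T.Nonempty := by
      rw [← reach_c_ne hP hw hv]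
      constructor
      · rintro ((h | ⟨p, hp⟩) | h)
        · exact ⟨_, h⟩
        · exact ⟨_, hp⟩
        · exact ⟨_, h⟩
      · rintro ⟨u, hu⟩
        cases u with
        | bot => exact Or.inl (Or.inl hu)
        | plain p => exact Or.inl (Or.inr ⟨p, hu⟩)
        | top => exact Or.inr hu
    have hTR : w ∈ TRset P ↔ (St.bot ∈ T ∨ ∃ p, St.plain p ∈ T) := by
      constructor
      · rintro (h | h)
        · exact Or.inl (hTE.1 h)
        · exact Or.inr (hTP.1 h)
      · rintro (h | h)
        · exact Or.inl (hTE.2 h)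
        · exact Or.inr (hTP.2 h)
    -- determinised side
    have hinit : P.det.init = detSt S0 := rfl
    have hSC := stepChar hP w hv P.det.init S0 ⟨_, rfl⟩ hinit
    have hMdet : ∀ t : St (Set P.Sig),
        Reach P.det w t ↔ (T.Nonempty ∧ t = detSt T) := by
      intro t
      rw [reach_det_char hP]
      constructor
      · rintro ⟨_, hok, rfl⟩
        exact ⟨hSC.1.2 hok, hSC.2 hok⟩
      · rintro ⟨hne, rfl⟩
        exact ⟨hw, hSC.1.1 hne, (hSC.2 (hSC.1.1 hne)).symm⟩
    have hEm : w ∈ TEset P.mirror ↔ Reach P.det w .top := by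
      show Reach P.mirror.complete w .bot ↔ _
      refine (reach_mc_iff (P := P) w _).trans ?_
      exact Iff.rfl
    have hMm : w ∈ TMset P.mirror ↔ Reach P.det w .bot := by
      show Reach P.mirror.complete w .top ↔ _
      refine (reach_mc_iff (P := P) w _).trans ?_
      exact Iff.rfl
    have hPm : w ∈ TPset P.mirror ↔ ∃ X : Set P.Sig, Reach P.det w (.plain X) := by
      constructor
      · rintro ⟨X, hX⟩
        exact ⟨X, ((reach_mc_iff (P := P) w (St.plain X)).1 hX : _)⟩
      · rintro ⟨X, hX⟩
        exact ⟨X, (reach_mc_iff (P := P) w (St.plain X)).2 hX⟩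
    refine ⟨?_, ?_, ?_⟩
    · -- error traces of the mirror are `TT \ TR`
      refine hEm.trans ((hMdet _).trans ?_)
      rw [Set.mem_diff, hTT, hTR]
      constructor
      · rintro ⟨hne, hds⟩
        have h2 := detSt_top_iff.1 hds.symm
        rw [singleton_top_iff] at h2
        refine ⟨hne, ?_⟩
        rintro (hb | ⟨p, hp⟩)
        · exact h2.1 hb
        · exact h2.2.2.2 p hp
      · rintro ⟨hne, hnr⟩
        refine ⟨hne, ?_⟩
        have hb : St.bot ∉ T := fun hb => hnr (Or.inl hb)
        have hp : ∀ p, St.plain p ∉ T := fun p hp => hnr (Or.inr ⟨p, hp⟩)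
        exact (detSt_top_iff.2 ⟨hb, singleton_top_iff.2 ⟨hne, hb, hp⟩⟩).symm
    · -- plain traces of the mirror are `TP \ TE`
      rw [hPm, Set.mem_diff, hTP, hTE]
      constructor
      · rintro ⟨X, hX⟩
        obtain ⟨hne, hds⟩ := (hMdet _).1 hX
        obtain ⟨hb, ht⟩ := detSt_plain_iff.1 ⟨X, hds.symm⟩
        exact ⟨exists_plain_of_nonempty hne hb ht, hb⟩
      · rintro ⟨⟨p, hp⟩, hb⟩
        have ht : T ≠ {St.top} := by
          intro hc
          rw [hc] at hp
          exact absurd hp (by simp)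
        obtain ⟨X, hX⟩ := detSt_plain_iff.2 ⟨hb, ht⟩
        exact ⟨X, (hMdet _).2 ⟨⟨_, hp⟩, hX.symm⟩⟩
    · -- magic traces of the mirror are `TE`
      refine hMm.trans ((hMdet _).trans ?_)
      rw [hTE]
      constructor
      · rintro ⟨_, hds⟩
        exact detSt_bot_iff.1 hds.symm
      · intro hb
        exact ⟨⟨_, hb⟩, (detSt_of_bot_mem hb).symm⟩
  · -- ill-formed or invalid words belong to no trace set
    have hgoodP : ∀ u, Reach P.complete w u → False := by
      intro u h
      exact hgood ⟨exec_isTWord h, exec_valid (fun s α t ht => c_valid hP ht) h⟩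
    have hgoodM : ∀ u, Reach P.mirror.complete w u → False := by
      intro u h
      have := (reach_mc_iff w u).1 h
      exact hgood ⟨exec_isTWord this, exec_valid (fun s α t ht => det_tr_valid s α t ht) this⟩
    refine ⟨⟨?_, ?_⟩, ⟨?_, ?_⟩, ⟨?_, ?_⟩⟩
    · intro h; exact absurd h (hgoodM _)
    · rintro ⟨htt, -⟩
      rcases htt with (h | ⟨p, hp⟩) | h
      · exact absurd h (hgoodP _)
      · exact absurd hp (hgoodP _)
      · exact absurd h (hgoodP _)
    · rintro ⟨X, hX⟩; exact absurd hX (hgoodM _)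
    · rintro ⟨⟨p, hp⟩, -⟩
      exact absurd hp (hgoodP _)
    · intro h; exact absurd h (hgoodM _)
    · intro h
      exact absurd h (hgoodP _)

end MirrorMain

/-- The triple-trace structure of the mirror `P₀¬` is
`(O₀, I₀, TT₀, TT₀ ∖ TE₀, TT₀ ∖ TR₀)`. -/
theorem traces_mirror {Act : Type} (P₀ : TIOTS Act) (hP : WF P₀) :
    P₀.mirror.I = P₀.O ∧
    P₀.mirror.O = P₀.I ∧
    TTset P₀.mirror = TTset P₀ ∧
    TRset P₀.mirror = TTset P₀ \ TEset P₀ ∧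
    TEset P₀.mirror = TTset P₀ \ TRset P₀ := by
  refine ⟨rfl, rfl, ?_, ?_, ?_⟩
  · ext w
    have hm := mirror_master hP w
    constructor
    · rintro ((h | h) | h)
      · exact (hm.1.1 h).1
      · exact Or.inl (Or.inr (hm.2.1.1 h).1)
      · exact Or.inl (Or.inl (hm.2.2.1 h))
    · intro h
      by_cases hE : w ∈ TEset P₀
      · exact Or.inr (hm.2.2.2 hE)
      by_cases hp : w ∈ TPset P₀
      · exact Or.inl (Or.inr (hm.2.1.2 ⟨hp, hE⟩))
      · refine Or.inl (Or.inl (hm.1.2 ⟨h, ?_⟩))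
        rintro (h' | h')
        · exact hE h'
        · exact hp h'
  · ext w
    have hm := mirror_master hP w
    constructor
    · rintro (h | h)
      · have h2 := hm.1.1 h
        refine ⟨h2.1, fun hE => h2.2 (Or.inl hE)⟩
      · have h2 := hm.2.1.1 h
        exact ⟨Or.inl (Or.inr h2.1), h2.2⟩
    · rintro ⟨hTT, hE⟩
      by_cases hp : w ∈ TPset P₀
      · exact Or.inr (hm.2.1.2 ⟨hp, hE⟩)
      · refine Or.inl (hm.1.2 ⟨hTT, ?_⟩)
        rintro (h' | h')
        · exact hE h'
        · exact hp h'
  · ext w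
    exact (mirror_master hP w).1

end TSpec
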